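/- arXiv:1712.00809 — 3 statements merged into one kernel-verified Lean document; each statement's English description precedes it below -/
import Mathlib

section
/- If G is a connected d-distinguishing critical graph for some d ≥ 2 and G is triangle-free, then G is isomorphic to K₂, K_{d−1,d−1}, or C₅. -/
/-!
An independent set of `d` vertices induces a subgraph with distinguishing number `d`, so in a
connected `d`-critical graph every independent set has fewer than `d` vertices; if the graph is
triangle-free, neighbourhoods are independent and all degrees are at most `d - 1`.

The labellings are built around a root `u` and give different colours to vertices with the same
distance to `u` and the same neighbours one step closer to `u`. Such a labelling is
distinguishing as soon as colour-preserving automorphisms fix `u`, so with `d - 1` colours some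
colour-preserving automorphism moves `u`. Reserving one colour for `u` and a few chosen vertices
confines where `u` can go, and each application rules out every candidate. This yields a vertex
`u` of degree `d - 1` whose neighbours also have degree `d - 1`, all other vertices lie at
distance `2` from `u`, the neighbours `≠ u` of any `x ∈ N(u)` see the same part of `N(u)`, and a
vertex seeing two vertices of `N(u)` has neighbourhood `N(u)`.

If some vertex other than `u` sees all of `N(u)`, the graph is `K_{d-1,d-1}` with parts `N(u)`
and `N(x)` for any `x ∈ N(u)`. Otherwise every vertex at distance `2` sees exactly one vertex of
`N(u)`, and two vertices of `N(u)` together with the other neighbours of a third are independent,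
so `d = 3` and the graph is `C₅`. For `d = 2` the graph is complete, hence `K₂`.
-/

/-- A labeling with `r` labels is distinguishing if the only automorphism
preserving all labels is the identity. -/
def IsDistinguishing {V : Type*} (G : SimpleGraph V) (r : ℕ) (f : V → Fin r) : Prop :=
  ∀ φ : G ≃g G, (∀ v, f (φ v) = f v) → ∀ v, φ v = v

/-- The distinguishing number of a graph. -/
noncomputable def distNum {V : Type*} (G : SimpleGraph V) : ℕ :=
  sInf {r : ℕ | ∃ f : V → Fin r, IsDistinguishing G r f}

/-- A graph is `d`-distinguishing critical if its distinguishing number is `d`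
and no proper induced subgraph has distinguishing number `d`. -/
def DistCritical {V : Type*} (G : SimpleGraph V) (d : ℕ) : Prop :=
  distNum G = d ∧ ∀ s : Set V, s ≠ Set.univ → distNum (G.induce s) ≠ d

/-- The disjoint union of `c` copies of a graph `H`. -/
def copies {W : Type*} (c : ℕ) (H : SimpleGraph W) : SimpleGraph (Fin c × W) where
  Adj a b := a.1 = b.1 ∧ H.Adj a.2 b.2
  symm := ⟨fun a b h => ⟨h.1.symm, h.2.symm⟩⟩
  loopless := ⟨fun a h => H.loopless.irrefl a.2 h.2⟩

/-- `numDistLab G k` is the number of inequivalent `k`-distinguishing labelings of `G`,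
two labelings being equivalent when some automorphism of `G` maps one to the other. -/
noncomputable def numDistLab {V : Type*} (G : SimpleGraph V) (k : ℕ) : ℕ :=
  Nat.card (Quot (fun f g : {f : V → Fin k // IsDistinguishing G k f} =>
    ∃ φ : G ≃g G, ∀ v, f.1 (φ v) = g.1 v))

open SimpleGraph Finset Function

section

variable {V : Type*}

theorem distNum_le_of_isDistinguishing {G : SimpleGraph V} {r : ℕ} {f : V → Fin r}
    (hf : IsDistinguishing G r f) : distNum G ≤ r :=
  Nat.sInf_le ⟨f, hf⟩

theorem isDistinguishing_of_injective {G : SimpleGraph V} {r : ℕ} {f : V → Fin r}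
    (hf : Injective f) : IsDistinguishing G r f :=
  fun _ hφ v => hf (hφ v)

theorem distNum_le_card [Fintype V] (G : SimpleGraph V) : distNum G ≤ Fintype.card V :=
  distNum_le_of_isDistinguishing (isDistinguishing_of_injective (Fintype.equivFin V).injective)

theorem IsDistinguishing.injective_of_forall_not_adj {G : SimpleGraph V} {r : ℕ}
    {f : V → Fin r} (hf : IsDistinguishing G r f) (hG : ∀ a b, ¬ G.Adj a b) : Injective f := by
  classical
  intro a b hab
  let σ : G ≃g G := ⟨Equiv.swap a b, iff_of_false (hG _ _) (hG _ _)⟩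
  have hσ : ∀ v, f (σ v) = f v := fun v => by
    simp only [σ, RelIso.coe_fn_mk, Equiv.swap_apply_def]
    split_ifs <;> simp_all
  simpa [σ] using (hf σ hσ a).symm

theorem distNum_eq_card_of_forall_not_adj [Fintype V] {G : SimpleGraph V}
    (hG : ∀ a b, ¬ G.Adj a b) : distNum G = Fintype.card V := by
  refine le_antisymm (distNum_le_card G) (le_csInf ⟨_, _, isDistinguishing_of_injective
    (Fintype.equivFin V).injective⟩ ?_)
  rintro r ⟨f, hf⟩
  simpa using Fintype.card_le_of_injective f (hf.injective_of_forall_not_adj hG)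

theorem DistCritical.indepSetFree [Fintype V] {G : SimpleGraph V} {d : ℕ} (hd : 2 ≤ d)
    (hconn : G.Connected) (hcrit : DistCritical G d) : G.IndepSetFree d := by
  rintro s ⟨hs, rfl⟩
  refine hcrit.2 s (fun huniv => ?_) ?_
  · obtain ⟨a, -, b, -, hab⟩ := one_lt_card.1 (by omega : 1 < #s)
    have hbot : G = ⊥ := by
      ext x y
      simpa using fun h =>
        hs (huniv ▸ Set.mem_univ x) (huniv ▸ Set.mem_univ y) (G.ne_of_adj h) h
    exact hab (reachable_bot.1 (hbot ▸ hconn.preconnected a b))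
  · rw [distNum_eq_card_of_forall_not_adj]
    · simp
    exact fun x y hxy => hs x.2 y.2 (hxy.ne ∘ Subtype.ext) hxy

theorem DistCritical.card_lt_of_isIndepSet [Fintype V] {G : SimpleGraph V} {d : ℕ} (hd : 2 ≤ d)
    (hconn : G.Connected) (hcrit : DistCritical G d) {s : Finset V} (hs : G.IsIndepSet s) :
    #s < d := by
  by_contra! h
  obtain ⟨t, hts, rfl⟩ := exists_subset_card_eq h
  exact hcrit.indepSetFree hd hconn t ⟨hs.mono (by simpa using hts), rfl⟩

theorem SimpleGraph.IsIndepSet.insert_of_not_adj {G : SimpleGraph V} {s : Set V} {a : V}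
    (hs : G.IsIndepSet s) (h : ∀ b ∈ s, ¬ G.Adj a b) : G.IsIndepSet (insert a s) :=
  hs.insert fun b hb _ => ⟨h b hb, fun h' => h b hb h'.symm⟩

theorem SimpleGraph.CliqueFree.not_adj_of_adj_of_adj {G : SimpleGraph V} (htf : G.CliqueFree 3)
    {u x y : V} (hx : G.Adj u x) (hy : G.Adj u y) : ¬ G.Adj x y :=
  fun hxy => isIndepSet_neighborSet_of_triangleFree G htf u hx hy (G.ne_of_adj hxy) hxy

theorem DistCritical.degree_lt [Fintype V] {G : SimpleGraph V} [DecidableRel G.Adj] {d : ℕ}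
    (hd : 2 ≤ d) (hconn : G.Connected) (hcrit : DistCritical G d) (htf : G.CliqueFree 3)
    (v : V) : G.degree v < d := by
  rw [← card_neighborFinset_eq_degree]
  exact hcrit.card_lt_of_isIndepSet hd hconn
    (by simpa using isIndepSet_neighborSet_of_triangleFree G htf v)

theorem SimpleGraph.Connected.dist_map_iso {W : Type*} {G : SimpleGraph V} {G' : SimpleGraph W}
    (hconn : G.Connected) (φ : G ≃g G') (u v : V) : G'.dist (φ u) (φ v) = G.dist u v := by
  obtain ⟨p, hp⟩ := (hconn u v).exists_walk_length_eq_dist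
  obtain ⟨q, hq⟩ := ((hconn u v).map φ.toHom).exists_walk_length_eq_dist
  refine le_antisymm ?_ ?_
  · simpa [hp] using dist_le (p.map φ.toHom)
  · simpa [hq] using dist_le (q.map φ.symm.toHom)

theorem SimpleGraph.Connected.exists_adj_dist_add_one {G : SimpleGraph V} (hconn : G.Connected)
    {u v : V} (hv : v ≠ u) : ∃ p, G.Adj p v ∧ G.dist u p + 1 = G.dist u v := by
  obtain ⟨w, hw⟩ := (hconn v u).exists_walk_length_eq_dist
  cases w with
  | nil => exact absurd rfl hv
  | @cons _ p _ h q =>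
    refine ⟨p, h.symm, le_antisymm ?_ ?_⟩
    · rw [dist_comm (u := u) (v := v), ← hw, Walk.length_cons, dist_comm]
      exact Nat.succ_le_succ (dist_le q)
    · exact (hconn.dist_triangle (v := p)).trans (by rw [dist_eq_one_iff_adj.2 h.symm])

theorem SimpleGraph.Connected.adj_of_dist_le_one {G : SimpleGraph V} (hconn : G.Connected)
    {u v : V} (h : G.dist u v ≤ 1) (hv : v ≠ u) : G.Adj u v := by
  have : G.dist u v ≠ 0 := fun h0 => hv (hconn.dist_eq_zero_iff.1 h0).symm
  exact dist_eq_one_iff_adj.1 (by omega)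

theorem SimpleGraph.dist_eq_two_of_adj_of_adj {G : SimpleGraph V} {u x v : V} (hv : v ≠ u)
    (huv : ¬ G.Adj u v) (hx : G.Adj u x) (hxv : G.Adj x v) : G.dist u v = 2 := by
  have : G.edist u v = 2 :=
    edist_eq_two_iff.2 ⟨hv.symm, huv, x, G.mem_commonNeighbors.2 ⟨hx, hxv.symm⟩⟩
  simp [dist, this]

theorem Set.InjOn.neighborSet_aut_apply {G : SimpleGraph V} {α : Type*} {f : V → α} {u : V}
    (hf : Set.InjOn f (G.neighborSet u)) (φ : G ≃g G) (hφ : ∀ v, f (φ v) = f v) :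
    Set.InjOn f (G.neighborSet (φ u)) := by
  intro a ha b hb hab
  have hsymm : ∀ x, f (φ.symm x) = f x := fun x => by
    conv_rhs => rw [← φ.apply_symm_apply x]
    exact (hφ _).symm
  have hmem : ∀ x ∈ G.neighborSet (φ u), φ.symm x ∈ G.neighborSet u := fun x hx => by
    rw [mem_neighborSet, ← φ.map_adj_iff]
    simpa using hx
  exact φ.symm.injective (hf (hmem a ha) (hmem b hb) (by rw [hsymm, hsymm, hab]))

theorem nonempty_iso_completeBipartiteGraph_of_adj_iff [Fintype V] [DecidableEq V]
    {G : SimpleGraph V} {m : ℕ} (s : Finset V) (hs : #s = m) (hsc : #sᶜ = m)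
    (hadj : ∀ v w, G.Adj v w ↔ (v ∈ s ↔ w ∉ s)) :
    Nonempty (G ≃g completeBipartiteGraph (Fin m) (Fin m)) := by
  let e : G ≃g completeBipartiteGraph {v // v ∈ s} {v // v ∉ s} :=
    ⟨(Equiv.sumCompl (· ∈ s)).symm, fun {v w} => by
      rw [hadj]
      by_cases hv : v ∈ s <;> by_cases hw : w ∈ s <;>
        simp [Equiv.sumCompl_symm_apply_of_pos, Equiv.sumCompl_symm_apply_of_neg, hv, hw]⟩
  exact ⟨e.trans (completeBipartiteGraphCongr (Fintype.equivFinOfCardEq (by simpa using hs))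
    (Fintype.equivFinOfCardEq (by simpa [← hsc] using (card_compl s).symm)))⟩

theorem nonempty_iso_cycleGraph_five_of_cover {G : SimpleGraph V} {u x a b y : V}
    (hcover : ∀ v, v = u ∨ v = x ∨ v = a ∨ v = b ∨ v = y)
    (hux : G.Adj u x) (hxa : G.Adj x a) (hab : G.Adj a b) (hby : G.Adj b y) (hyu : G.Adj y u)
    (hua : ¬ G.Adj u a) (hub : ¬ G.Adj u b) (hxb : ¬ G.Adj x b) (hxy : ¬ G.Adj x y)
    (hay : ¬ G.Adj a y) : Nonempty (G ≃g cycleGraph 5) := by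
  let g : Fin 5 → V := ![u, x, a, b, y]
  have hadj : ∀ i j, G.Adj (g i) (g j) ↔ (cycleGraph 5).Adj i j := by
    intro i j
    fin_cases i <;> fin_cases j <;>
      simp [g, hux, hxa, hab, hby, hyu, hux.symm, hxa.symm, hab.symm, hby.symm, hyu.symm, hua,
        hub, hxb, hxy, hay, mt Adj.symm hua, mt Adj.symm hub, mt Adj.symm hxb, mt Adj.symm hxy,
        mt Adj.symm hay] <;> decide
  have htwin : ∀ i j : Fin 5, (∀ k, (cycleGraph 5).Adj i k ↔ (cycleGraph 5).Adj j k) →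
      i = j := by
    decide
  have hinj : Injective g := fun i j hij => htwin i j fun k => by rw [← hadj, ← hadj, hij]
  have hsurj : Surjective g := fun v => by
    rcases hcover v with rfl | rfl | rfl | rfl | rfl
    exacts [⟨0, rfl⟩, ⟨1, rfl⟩, ⟨2, rfl⟩, ⟨3, rfl⟩, ⟨4, rfl⟩]
  exact ⟨(⟨Equiv.ofBijective g ⟨hinj, hsurj⟩, hadj _ _⟩ : cycleGraph 5 ≃g G).symm⟩

section Labeling

variable {K α : Type*} [DecidableEq K]

theorem exists_injective_prodMk_of_card_fibre_le [Fintype V] (κ : V → K) (C : K → Finset α)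
    (h : ∀ v, #{w | κ w = κ v} ≤ #(C (κ v))) :
    ∃ f : V → α, (∀ v, f v ∈ C (κ v)) ∧ Injective fun v => (κ v, f v) := by
  have he : ∀ a, Nonempty ({v // κ v = a} ↪ C a) := by
    intro a
    apply Function.Embedding.nonempty_of_card_le
    by_cases ha : ∃ v, κ v = a
    · obtain ⟨v, rfl⟩ := ha
      simpa [Fintype.card_subtype] using h v
    · simp [not_exists.mp ha]
  let e a := (he a).some
  have hfe : ∀ v a (hv : κ v = a), (e (κ v) ⟨v, rfl⟩ : α) = e a ⟨v, hv⟩ := by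
    rintro v a rfl
    rfl
  refine ⟨fun v => e (κ v) ⟨v, rfl⟩, fun v => (e _ _).2, fun v w hvw => ?_⟩
  obtain ⟨hk, hc⟩ := Prod.mk.inj hvw
  dsimp only at hc
  rw [hfe v (κ v) rfl, hfe w (κ v) hk.symm] at hc
  exact congrArg Subtype.val ((e _).injective (Subtype.ext hc))

theorem exists_update_of_injective_prodMk [DecidableEq α] {κ : V → K} {C : K → Finset α}
    {f : V → α} (hfC : ∀ v, f v ∈ C (κ v)) (hf : Injective fun v => (κ v, f v)) (x : V)
    {c : α} (hc : c ∈ C (κ x)) :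
    ∃ g : V → α, (∀ v, g v ∈ C (κ v)) ∧ (Injective fun v => (κ v, g v)) ∧ g x = c ∧
      ∀ v, κ v ≠ κ x → g v = f v := by
  refine ⟨fun v => if κ v = κ x then Equiv.swap (f x) c (f v) else f v, fun v => ?_, ?_,
    by simp, fun v hv => if_neg hv⟩
  · dsimp only
    split_ifs with h
    · rw [Equiv.swap_apply_def]
      split_ifs
      · exact h ▸ hc
      · exact h ▸ hfC x
      · exact hfC v
    · exact hfC v
  · intro v w hvw
    obtain ⟨hk, hc'⟩ := Prod.mk.inj hvw
    refine hf (Prod.ext hk ?_)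
    dsimp only at hc'
    rw [hk] at hc'
    split_ifs at hc' with h
    · exact (Equiv.swap (f x) c).injective hc'
    · exact hc'

end Labeling

section Palette

variable {K : Type*} {k : ℕ}

open Classical in
noncomputable def palette (c : Fin k) (R : Set K) (a : K) : Finset (Fin k) :=
  if a ∈ R then univ else univ.erase c

variable {c : Fin k} {R : Set K} {a : K}

theorem palette_of_mem (h : a ∈ R) : palette c R a = univ := by simp [palette, h]

theorem palette_of_notMem (h : a ∉ R) : palette c R a = univ.erase c := by simp [palette, h]

theorem mem_of_mem_palette (h : c ∈ palette c R a) : a ∈ R := by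
  by_contra ha
  simp [palette_of_notMem ha] at h

end Palette

section BFS

variable [Fintype V] {G : SimpleGraph V} [DecidableRel G.Adj] {d : ℕ} {u : V}

noncomputable def bfsKey (G : SimpleGraph V) [DecidableRel G.Adj] (u v : V) : ℕ × Finset V :=
  (G.dist u v, {p ∈ G.neighborFinset v | G.dist u p + 1 = G.dist u v})

theorem bfsKey_apply_eq (hconn : G.Connected) (φ : G ≃g G) (hu : φ u = u) {v : V}
    (hfix : ∀ p, G.dist u p < G.dist u v → φ p = p) : bfsKey G u (φ v) = bfsKey G u v := by
  have hdist : G.dist u (φ v) = G.dist u v := by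
    simpa [hu] using hconn.dist_map_iso φ u v
  simp only [bfsKey, hdist, Prod.mk.injEq, true_and]
  ext p
  simp only [mem_filter, mem_neighborFinset, and_congr_left_iff]
  intro hp
  have := φ.map_adj_iff (v := v) (w := p)
  rwa [hfix p (by omega)] at this

theorem isDistinguishing_of_injective_bfsKey (hconn : G.Connected) {k : ℕ} {f : V → Fin k}
    (hf : Injective fun v => (bfsKey G u v, f v))
    (hu : ∀ φ : G ≃g G, (∀ v, f (φ v) = f v) → φ u = u) : IsDistinguishing G k f := by
  intro φ hφ v
  induction hv : G.dist u v using Nat.strong_induction_on generalizing v with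
  | _ n ih =>
    exact hf (Prod.ext (bfsKey_apply_eq hconn φ (hu φ hφ) fun p hp => ih _ (hv ▸ hp) p rfl)
      (hφ v))

theorem exists_aut_apply_ne_of_injective_bfsKey (hconn : G.Connected) {k : ℕ}
    (hG : distNum G = d) (hk : k < d) {f : V → Fin k}
    (hf : Injective fun v => (bfsKey G u v, f v)) :
    ∃ φ : G ≃g G, (∀ v, f (φ v) = f v) ∧ φ u ≠ u := by
  by_contra! h
  have := distNum_le_of_isDistinguishing (isDistinguishing_of_injective_bfsKey hconn hf h)
  omega

theorem bfsKey_eq_bfsKey_self_iff (hconn : G.Connected) {v : V} :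
    bfsKey G u v = bfsKey G u u ↔ v = u := by
  refine ⟨fun h => ?_, fun h => h ▸ rfl⟩
  have : G.dist u v = 0 := by simpa [bfsKey] using congrArg Prod.fst h
  exact (hconn.dist_eq_zero_iff.1 this).symm

theorem bfsKey_of_adj (hconn : G.Connected) {v : V} (h : G.Adj u v) :
    bfsKey G u v = (1, {u}) := by
  ext p
  · simpa [bfsKey]
  · simp only [bfsKey, dist_eq_one_iff_adj.2 h, mem_filter, mem_neighborFinset, mem_singleton,
      Nat.add_eq_right, hconn.dist_eq_zero_iff]
    exact ⟨fun h => h.2.symm, fun hp => ⟨hp ▸ h.symm, hp.symm⟩⟩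

theorem bfsKey_of_dist_eq_two {w : V} (h : G.dist u w = 2) :
    bfsKey G u w = (2, {p ∈ G.neighborFinset w | G.Adj u p}) := by
  simp [bfsKey, h, ← dist_eq_one_iff_adj]

theorem bfsKey_ne_of_dist_ne {v w : V} (h : G.dist u v ≠ G.dist u w) :
    bfsKey G u v ≠ bfsKey G u w :=
  fun hk => h (congrArg Prod.fst hk)

theorem filter_bfsKey_eq_self [DecidableEq V] (hconn : G.Connected) :
    ({w | bfsKey G u w = bfsKey G u u} : Finset V) = {u} := by
  ext w
  simp [bfsKey_eq_bfsKey_self_iff hconn]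

theorem filter_bfsKey_eq_subset_neighborFinset [DecidableEq V] {p v : V} (hp : G.Adj p v)
    (hpv : G.dist u p + 1 = G.dist u v) :
    ({w | bfsKey G u w = bfsKey G u v} : Finset V) ⊆ G.neighborFinset p := by
  intro w hw
  have hmem : p ∈ (bfsKey G u v).2 := by simpa [bfsKey] using ⟨hp.symm, hpv⟩
  simp only [mem_filter, mem_univ, true_and] at hw
  rw [← hw] at hmem
  simpa [bfsKey, adj_comm] using (mem_filter.1 hmem).1

theorem card_filter_bfsKey_le_degree [DecidableEq V] (hconn : G.Connected) {v : V} (hv : v ≠ u) :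
    ∃ p, #{w | bfsKey G u w = bfsKey G u v} ≤ G.degree p := by
  obtain ⟨p, hp, hpv⟩ := hconn.exists_adj_dist_add_one hv
  exact ⟨p, card_neighborFinset_eq_degree G p ▸
    card_le_card (filter_bfsKey_eq_subset_neighborFinset hp hpv)⟩

theorem injOn_neighborSet_of_injective_bfsKey (hconn : G.Connected) {α : Type*} {f : V → α}
    (hf : Injective fun v => (bfsKey G u v, f v)) : Set.InjOn f (G.neighborSet u) :=
  fun a ha b hb hab => hf (Prod.ext (show bfsKey G u a = bfsKey G u b by
    rw [bfsKey_of_adj hconn ha, bfsKey_of_adj hconn hb]) hab)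

theorem commonNeighbors_eq_of_bfsKey_eq {w w' : V} (hw : G.dist u w = 2)
    (hw' : G.dist u w' = 2) (h : bfsKey G u w = bfsKey G u w') :
    G.commonNeighbors u w = G.commonNeighbors u w' := by
  rw [bfsKey_of_dist_eq_two hw, bfsKey_of_dist_eq_two hw', Prod.mk.injEq] at h
  ext p
  simpa [mem_commonNeighbors, and_comm] using congrArg (p ∈ ·) h.2

theorem bfsKey_ne_of_adj (hconn : G.Connected) (htf : G.CliqueFree 3) {w w' : V}
    (hw : G.dist u w = 2) (hw' : G.dist u w' = 2) (hww' : G.Adj w w') :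
    bfsKey G u w ≠ bfsKey G u w' := by
  intro h
  obtain ⟨p, hpw, hp⟩ := hconn.exists_adj_dist_add_one (show w ≠ u by rintro rfl; simp at hw)
  have hup : G.Adj u p := dist_eq_one_iff_adj.1 (by omega)
  have hp' : p ∈ G.commonNeighbors u w' :=
    commonNeighbors_eq_of_bfsKey_eq hw hw' h ▸ (G.mem_commonNeighbors).2 ⟨hup, hpw.symm⟩
  exact htf.not_adj_of_adj_of_adj hpw.symm hww' ((G.mem_commonNeighbors).1 hp').2.symm

theorem exists_aut_apply_ne_of_palette (hconn : G.Connected) (hG : distNum G = d)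
    {c : Fin (d - 1)} {R : Set (ℕ × Finset V)} {f : V → Fin (d - 1)}
    (hfC : ∀ v, f v ∈ palette c R (bfsKey G u v)) (hf : Injective fun v => (bfsKey G u v, f v))
    (hfu : f u = c) :
    ∃ φ : G ≃g G, (∀ v, f (φ v) = f v) ∧ φ u ≠ u ∧ f (φ u) = c ∧
      bfsKey G u (φ u) ∈ R := by
  obtain ⟨φ, hφ, hφu⟩ :=
    exists_aut_apply_ne_of_injective_bfsKey hconn hG (by have := c.2; omega) hf
  have hc : f (φ u) = c := (hφ u).trans hfu
  exact ⟨φ, hφ, hφu, hc, mem_of_mem_palette (hc ▸ hfC (φ u))⟩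

theorem exists_aut_apply_eq_of_palette (hconn : G.Connected) (hG : distNum G = d)
    {c : Fin (d - 1)} {x w : V} {f : V → Fin (d - 1)}
    (hfC : ∀ v, f v ∈ palette c {a | a.1 ≤ 1 ∨ a = bfsKey G u w} (bfsKey G u v))
    (hf : Injective fun v => (bfsKey G u v, f v)) (hx : G.Adj u x) (hxw : G.Adj x w)
    (hwu : w ≠ u) (hfu : f u = c) (hfx : f x = c) (hfw : f w = c) :
    ∃ φ : G ≃g G, (∀ v, f (φ v) = f v) ∧ φ u = w := by
  obtain ⟨φ, hφ, hφu, hc, hR | hR⟩ := exists_aut_apply_ne_of_palette hconn hG hfC hf hfu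
  · have hφx : φ u = x :=
      injOn_neighborSet_of_injective_bfsKey hconn hf (hconn.adj_of_dist_le_one hR hφu) hx
        (hc.trans hfx.symm)
    have hinj := (injOn_neighborSet_of_injective_bfsKey hconn hf).neighborSet_aut_apply φ hφ
    rw [hφx] at hinj
    exact absurd (hinj hxw hx.symm (hfw.trans hfu.symm)) hwu
  · exact ⟨φ, hφ, hf (Prod.ext hR (hc.trans hfw.symm))⟩

end BFS

section Critical

variable [Fintype V] {G : SimpleGraph V} [DecidableRel G.Adj] {d : ℕ} {u : V}

theorem DistCritical.exists_degree_eq (hd : 2 ≤ d) (hconn : G.Connected)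
    (hcrit : DistCritical G d) (htf : G.CliqueFree 3) : ∃ u, G.degree u = d - 1 := by
  classical
  by_contra! h
  have hdeg : ∀ v, G.degree v < d - 1 := fun v => by
    have := hcrit.degree_lt hd hconn htf v
    have := h v
    omega
  obtain ⟨u⟩ : Nonempty V := Fintype.card_pos_iff.1 (by
    have := distNum_le_card G
    rw [hcrit.1] at this
    omega)
  -- Every fibre other than `{u}` lies in a neighbourhood of size `< d - 1`, so it can avoid
  -- the colour `c` of `u`; then no colour-preserving automorphism moves `u`.
  let c : Fin (d - 1) := ⟨0, by omega⟩
  obtain ⟨f₀, hf₀C, hf₀⟩ := exists_injective_prodMk_of_card_fibre_le (bfsKey G u)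
    (palette c {bfsKey G u u}) fun v => by
      by_cases hv : v = u
      · subst hv
        rw [filter_bfsKey_eq_self hconn, palette_of_mem (Set.mem_singleton _)]
        simp
        omega
      · obtain ⟨p, hp⟩ := card_filter_bfsKey_le_degree hconn hv
        have := hdeg p
        have hvR : bfsKey G u v ∉ ({bfsKey G u u} : Set _) := by
          simpa [bfsKey_eq_bfsKey_self_iff hconn] using hv
        rw [palette_of_notMem hvR]
        simp
        omega
  obtain ⟨f, hfC, hf, hfu, -⟩ := exists_update_of_injective_prodMk hf₀C hf₀ u (c := c)
    (by simp [palette_of_mem])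
  obtain ⟨φ, hφ, hφu⟩ :=
    exists_aut_apply_ne_of_injective_bfsKey hconn hcrit.1 (by omega : d - 1 < d) hf
  have h := hfC (φ u)
  rw [hφ, hfu] at h
  exact hφu ((bfsKey_eq_bfsKey_self_iff hconn).1 (mem_of_mem_palette h))

theorem DistCritical.exists_adj_adj_of_degree_eq (hd : 2 ≤ d) (hconn : G.Connected)
    (hcrit : DistCritical G d) (htf : G.CliqueFree 3) (hu : G.degree u = d - 1) {v : V}
    (huv : ¬ G.Adj u v) : ∃ x, G.Adj u x ∧ G.Adj x v := by
  classical
  by_contra! h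
  have hind : G.IsIndepSet ↑(insert v (G.neighborFinset u)) := by
    rw [coe_insert, coe_neighborFinset]
    exact (isIndepSet_neighborSet_of_triangleFree G htf u).insert_of_not_adj
      fun x hx hvx => h x hx hvx.symm
  have := hcrit.card_lt_of_isIndepSet hd hconn hind
  rw [card_insert_of_notMem (by simpa using huv),
    card_neighborFinset_eq_degree] at this
  omega

theorem DistCritical.dist_eq_two_of_degree_eq (hd : 2 ≤ d) (hconn : G.Connected)
    (hcrit : DistCritical G d) (htf : G.CliqueFree 3) (hu : G.degree u = d - 1) {v : V}
    (hv : v ≠ u) (huv : ¬ G.Adj u v) : G.dist u v = 2 := by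
  obtain ⟨x, hx, hxv⟩ := hcrit.exists_adj_adj_of_degree_eq hd hconn htf hu huv
  exact dist_eq_two_of_adj_of_adj hv huv hx hxv

theorem DistCritical.card_filter_bfsKey_add_one_lt [DecidableEq V] (hd : 2 ≤ d)
    (hconn : G.Connected) (hcrit : DistCritical G d) (htf : G.CliqueFree 3) {w : V}
    (hw : G.dist u w = 2) : #{w' | bfsKey G u w' = bfsKey G u w} + 1 < d := by
  have hwu : w ≠ u := by
    rintro rfl
    simp at hw
  obtain ⟨p, hp, hpw⟩ := hconn.exists_adj_dist_add_one hwu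
  set F : Finset V := {w' | bfsKey G u w' = bfsKey G u w}
  have hdist : ∀ w' ∈ F, G.dist u w' = 2 := fun w' hw' => by
    simpa [bfsKey, hw] using congrArg Prod.fst (mem_filter.1 hw').2
  have hind : G.IsIndepSet ↑(insert u F) := by
    rw [coe_insert]
    refine IsIndepSet.insert_of_not_adj ((isIndepSet_neighborSet_of_triangleFree G htf p).mono ?_)
      fun w' hw' h => by simpa [dist_eq_one_iff_adj.2 h] using hdist w' hw'
    rw [← coe_neighborFinset]
    exact coe_subset.2 (filter_bfsKey_eq_subset_neighborFinset hp hpw)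
  have huF : u ∉ F := fun h => by simpa using hdist u h
  simpa [card_insert_of_notMem huF] using hcrit.card_lt_of_isIndepSet hd hconn hind

theorem DistCritical.exists_labeling_of_degree_eq (hd : 2 ≤ d) (hconn : G.Connected)
    (hcrit : DistCritical G d) (htf : G.CliqueFree 3) (hu : G.degree u = d - 1)
    (c : Fin (d - 1)) {R : Set (ℕ × Finset V)}
    (hR : ∀ v, G.dist u v ≤ 1 → bfsKey G u v ∈ R) {x : V} (hx : G.Adj u x) :
    ∃ f : V → Fin (d - 1), (∀ v, f v ∈ palette c R (bfsKey G u v)) ∧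
      (Injective fun v => (bfsKey G u v, f v)) ∧ f u = c ∧ f x = c := by
  classical
  obtain ⟨f₀, hf₀C, hf₀⟩ := exists_injective_prodMk_of_card_fibre_le (bfsKey G u)
    (palette c R) fun v => by
      by_cases hv : bfsKey G u v ∈ R
      · rw [palette_of_mem hv, card_univ, Fintype.card_fin]
        by_cases hvu : v = u
        · subst hvu
          rw [filter_bfsKey_eq_self hconn, card_singleton]
          omega
        · obtain ⟨p, hp⟩ := card_filter_bfsKey_le_degree hconn hvu
          have := hcrit.degree_lt hd hconn htf p
          omega
      · have hvu : v ≠ u := fun h => hv (hR v (by simp [h]))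
        have huv : ¬ G.Adj u v := fun h => hv (hR v (dist_eq_one_iff_adj.2 h).le)
        have := hcrit.card_filter_bfsKey_add_one_lt hd hconn htf
          (hcrit.dist_eq_two_of_degree_eq hd hconn htf hu hvu huv)
        rw [palette_of_notMem hv, card_erase_of_mem (mem_univ _), card_univ, Fintype.card_fin]
        omega
  obtain ⟨f₁, hf₁C, hf₁, hf₁u, -⟩ :=
    exists_update_of_injective_prodMk hf₀C hf₀ u (c := c)
    (by simp [palette_of_mem (hR u (by simp))])
  obtain ⟨f, hfC, hf, hfx, hfoth⟩ := exists_update_of_injective_prodMk hf₁C hf₁ x (c := c)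
    (by simp [palette_of_mem (hR x (dist_eq_one_iff_adj.2 hx).le)])
  refine ⟨f, hfC, hf, ?_, hfx⟩
  rw [hfoth u fun h => G.ne_of_adj hx ((bfsKey_eq_bfsKey_self_iff hconn).1 h.symm).symm, hf₁u]

theorem DistCritical.degree_eq_of_adj (hd : 2 ≤ d) (hconn : G.Connected)
    (hcrit : DistCritical G d) (htf : G.CliqueFree 3) (hu : G.degree u = d - 1) {x : V}
    (hx : G.Adj u x) : G.degree x = d - 1 := by
  obtain ⟨f, hfC, hf, hfu, hfx⟩ := hcrit.exists_labeling_of_degree_eq hd hconn htf hu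
    ⟨0, by omega⟩ (R := {a | a.1 ≤ 1}) (fun _ hv => hv) hx
  obtain ⟨φ, -, hφu, hc, hR⟩ := exists_aut_apply_ne_of_palette hconn hcrit.1 hfC hf hfu
  have hφx : φ u = x :=
    injOn_neighborSet_of_injective_bfsKey hconn hf (hconn.adj_of_dist_le_one hR hφu) hx
      (hc.trans hfx.symm)
  rw [← hφx, φ.degree_eq, hu]

theorem DistCritical.commonNeighbors_eq_of_adj (hd : 2 ≤ d) (hconn : G.Connected)
    (hcrit : DistCritical G d) (htf : G.CliqueFree 3) (hu : G.degree u = d - 1) {x w w' : V}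
    (hx : G.Adj u x) (hw : G.Adj x w) (hw' : G.Adj x w') (hwu : w ≠ u) (hw'u : w' ≠ u) :
    G.commonNeighbors u w = G.commonNeighbors u w' := by
  classical
  have h2 := dist_eq_two_of_adj_of_adj hwu (htf.not_adj_of_adj_of_adj hx.symm hw) hx hw
  have h2' := dist_eq_two_of_adj_of_adj hw'u (htf.not_adj_of_adj_of_adj hx.symm hw') hx hw'
  by_contra hne
  have hkey : bfsKey G u w ≠ bfsKey G u w' :=
    fun h => hne (commonNeighbors_eq_of_bfsKey_eq h2 h2' h)
  have hfar : ∀ v, G.dist u v = 2 → bfsKey G u v ∉ {a : ℕ × Finset V | a.1 ≤ 1} :=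
    fun v hv => by simp [bfsKey, hv]
  obtain ⟨f, hfC, hf, hfu, hfx⟩ := hcrit.exists_labeling_of_degree_eq hd hconn htf hu
    ⟨0, by omega⟩ (R := {a | a.1 ≤ 1}) (fun _ hv => hv) hx
  -- Colour `w'` like `w`: an automorphism moving `u` then sends it to `x`, whose neighbours do
  -- not all have different colours, unlike those of `u`.
  obtain ⟨g, hgC, hg, hgw', hgoth⟩ := exists_update_of_injective_prodMk hfC hf w' (c := f w)
    (by simpa [palette_of_notMem (hfar w' h2'), palette_of_notMem (hfar w h2)] using hfC w)
  have hgu : g u = f u := hgoth u (bfsKey_ne_of_dist_ne (by simp [h2']))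
  have hgx : g x = f x := hgoth x (bfsKey_ne_of_dist_ne (by simp [dist_eq_one_iff_adj.2 hx, h2']))
  obtain ⟨φ, hφ, hφu, hc, hR⟩ :=
    exists_aut_apply_ne_of_palette hconn hcrit.1 hgC hg (hgu.trans hfu)
  have hφx : φ u = x :=
    injOn_neighborSet_of_injective_bfsKey hconn hg (hconn.adj_of_dist_le_one hR hφu) hx
      (by rw [hc, hgx, hfx])
  have hinj := (injOn_neighborSet_of_injective_bfsKey hconn hg).neighborSet_aut_apply φ hφ
  rw [hφx] at hinj
  exact hkey (congrArg _ (hinj hw hw' (by rw [hgoth w hkey, hgw'])))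

theorem DistCritical.exists_labeling_of_adj_of_adj (hd : 2 ≤ d) (hconn : G.Connected)
    (hcrit : DistCritical G d) (htf : G.CliqueFree 3) (hu : G.degree u = d - 1)
    (c : Fin (d - 1)) {x w : V} (hx : G.Adj u x) (hxw : G.Adj x w) (hwu : w ≠ u) :
    ∃ f : V → Fin (d - 1),
      (∀ v, f v ∈ palette c {a | a.1 ≤ 1 ∨ a = bfsKey G u w} (bfsKey G u v)) ∧
      (Injective fun v => (bfsKey G u v, f v)) ∧ f u = c ∧ f x = c ∧ f w = c := by
  classical
  have h2 := dist_eq_two_of_adj_of_adj hwu (htf.not_adj_of_adj_of_adj hx.symm hxw) hx hxw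
  obtain ⟨f, hfC, hf, hfu, hfx⟩ := hcrit.exists_labeling_of_degree_eq hd hconn htf hu c
    (R := {a | a.1 ≤ 1 ∨ a = bfsKey G u w}) (fun _ hv => Or.inl hv) hx
  obtain ⟨g, hgC, hg, hgw, hgoth⟩ :=
    exists_update_of_injective_prodMk hfC hf w (c := c) (by simp [palette_of_mem])
  refine ⟨g, hgC, hg, ?_, ?_, hgw⟩
  · rw [hgoth u (bfsKey_ne_of_dist_ne (by simp [h2])), hfu]
  · rw [hgoth x (bfsKey_ne_of_dist_ne (by simp [dist_eq_one_iff_adj.2 hx, h2])), hfx]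

theorem DistCritical.neighborSet_subset_of_adj_of_adj (hd : 2 ≤ d) (hconn : G.Connected)
    (hcrit : DistCritical G d) (htf : G.CliqueFree 3) (hu : G.degree u = d - 1)
    {x x' w : V} (hx : G.Adj u x) (hx' : G.Adj u x') (hxx' : x ≠ x') (hxw : G.Adj x w)
    (hx'w : G.Adj x' w) (hwu : w ≠ u) : G.neighborSet w ⊆ G.neighborSet u := by
  classical
  intro w' hww'
  by_contra huw'
  have huw : ¬ G.Adj u w := htf.not_adj_of_adj_of_adj hx.symm hxw
  have h2 : G.dist u w = 2 := dist_eq_two_of_adj_of_adj hwu huw hx hxw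
  have hw'u : w' ≠ u := by
    rintro rfl
    exact huw hww'.symm
  have h2' : G.dist u w' = 2 := hcrit.dist_eq_two_of_degree_eq hd hconn htf hu hw'u huw'
  have hkey : bfsKey G u w' ≠ bfsKey G u w := (bfsKey_ne_of_adj hconn htf h2 h2' hww').symm
  have hlevel : ∀ v, G.dist u v ≤ 1 → bfsKey G u v ≠ bfsKey G u w' :=
    fun v hv => bfsKey_ne_of_dist_ne (by omega)
  have hw'R : bfsKey G u w' ∉ {a : ℕ × Finset V | a.1 ≤ 1 ∨ a = bfsKey G u w} := by
    rintro (h | h)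
    · simp [bfsKey, h2'] at h
    · exact hkey h
  obtain ⟨f, hfC, hf, hfu, hfx, hfw⟩ :=
    hcrit.exists_labeling_of_adj_of_adj hd hconn htf hu ⟨0, by omega⟩ hx hxw hwu
  -- Colour `w'` like `x'`: then `w` has two neighbours of the same colour, unlike `u`.
  have hfx' : f x' ≠ f x := fun h =>
    hxx' (injOn_neighborSet_of_injective_bfsKey hconn hf hx' hx h).symm
  obtain ⟨g, hgC, hg, hgw', hgoth⟩ := exists_update_of_injective_prodMk hfC hf w' (c := f x')
    (by simpa [palette_of_notMem hw'R, ← hfx] using hfx')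
  obtain ⟨φ, hφ, hφw⟩ := exists_aut_apply_eq_of_palette hconn hcrit.1 hgC hg hx hxw hwu
    (by rw [hgoth u (hlevel u (by simp)), hfu])
    (by rw [hgoth x (hlevel x (dist_eq_one_iff_adj.2 hx).le), hfx])
    (by rw [hgoth w hkey.symm, hfw])
  have hinj := (injOn_neighborSet_of_injective_bfsKey hconn hg).neighborSet_aut_apply φ hφ
  rw [hφw] at hinj
  have hx'w' : x' = w' := hinj hx'w.symm hww'
    (by rw [hgw', hgoth x' (hlevel x' (dist_eq_one_iff_adj.2 hx').le)])
  exact huw' (hx'w' ▸ hx')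

theorem DistCritical.neighborSet_eq_of_adj_of_adj (hd : 2 ≤ d) (hconn : G.Connected)
    (hcrit : DistCritical G d) (htf : G.CliqueFree 3) (hu : G.degree u = d - 1)
    {x x' w : V} (hx : G.Adj u x) (hx' : G.Adj u x') (hxx' : x ≠ x') (hxw : G.Adj x w)
    (hx'w : G.Adj x' w) (hwu : w ≠ u) : G.neighborSet w = G.neighborSet u := by
  obtain ⟨f, hfC, hf, hfu, hfx, hfw⟩ :=
    hcrit.exists_labeling_of_adj_of_adj hd hconn htf hu ⟨0, by omega⟩ hx hxw hwu
  obtain ⟨φ, -, hφw⟩ :=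
    exists_aut_apply_eq_of_palette hconn hcrit.1 hfC hf hx hxw hwu hfu hfx hfw
  refine Set.eq_of_subset_of_card_le
    (hcrit.neighborSet_subset_of_adj_of_adj hd hconn htf hu hx hx' hxx' hxw hx'w hwu) ?_
  rw [card_neighborSet_eq_degree, card_neighborSet_eq_degree, ← hφw, φ.degree_eq]

theorem DistCritical.nonempty_iso_completeBipartiteGraph_of_forall_adj (hd : 2 ≤ d)
    (hconn : G.Connected) (hcrit : DistCritical G d) (htf : G.CliqueFree 3)
    (hu : G.degree u = d - 1) {w₀ : V} (hw₀u : w₀ ≠ u)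
    (hw₀ : ∀ x, G.Adj u x → G.Adj w₀ x) :
    Nonempty (G ≃g completeBipartiteGraph (Fin (d - 1)) (Fin (d - 1))) := by
  classical
  have hfar : ∀ w, w ≠ u → ¬ G.Adj u w → ∀ x, G.Adj u x → G.Adj w x := by
    intro w hwu huw x hx
    obtain ⟨p, hup, hpw⟩ := hcrit.exists_adj_adj_of_degree_eq hd hconn htf hu huw
    have h := hcrit.commonNeighbors_eq_of_adj hd hconn htf hu hup (hw₀ p hup).symm hpw hw₀u hwu
    exact ((G.mem_commonNeighbors).1 (h ▸ (G.mem_commonNeighbors).2 ⟨hx, hw₀ x hx⟩)).2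
  obtain ⟨x₀, hx₀⟩ := card_pos.1 (show 0 < #(G.neighborFinset u) by
    rw [card_neighborFinset_eq_degree]
    omega)
  rw [mem_neighborFinset] at hx₀
  have hadj : ∀ v w, G.Adj v w ↔ (G.Adj u v ↔ ¬ G.Adj u w) := by
    intro v w
    by_cases hv : G.Adj u v <;> by_cases hw : G.Adj u w
    · exact iff_of_false (htf.not_adj_of_adj_of_adj hv hw) (by simp [hv, hw])
    · refine iff_of_true ?_ (by simp [hv, hw])
      by_cases hwu : w = u
      · exact hwu ▸ hv.symm
      · exact (hfar w hwu hw v hv).symm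
    · refine iff_of_true ?_ (by simp [hv, hw])
      by_cases hvu : v = u
      · exact hvu ▸ hw
      · exact hfar v hvu hv w hw
    · refine iff_of_false (fun hvw => ?_) (by simp [hv, hw])
      by_cases hvu : v = u
      · exact hw (hvu ▸ hvw)
      by_cases hwu : w = u
      · exact hv (hwu ▸ hvw).symm
      exact htf.not_adj_of_adj_of_adj (hfar v hvu hv x₀ hx₀).symm
        (hfar w hwu hw x₀ hx₀).symm hvw
  have hcompl : (G.neighborFinset u)ᶜ = G.neighborFinset x₀ := by
    ext v
    simp [hadj x₀ v, hx₀]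
  refine nonempty_iso_completeBipartiteGraph_of_adj_iff (G.neighborFinset u) (by simp [hu]) ?_
    (by simpa using hadj)
  rw [hcompl, card_neighborFinset_eq_degree, hcrit.degree_eq_of_adj hd hconn htf hu hx₀]

theorem DistCritical.eq_three_of_unique_adj (hd : 3 ≤ d) (hconn : G.Connected)
    (hcrit : DistCritical G d) (htf : G.CliqueFree 3) (hu : G.degree u = d - 1)
    (huniq : ∀ {x x' w}, G.Adj u x → G.Adj u x' → G.Adj x w → G.Adj x' w → w ≠ u →
      x = x') :
    d = 3 := by
  classical
  by_contra hne
  obtain ⟨x, y, z, hx, hy, hz, hxy, hxz, hyz⟩ := two_lt_card_iff.1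
    (show 2 < #(G.neighborFinset u) by rw [card_neighborFinset_eq_degree]; omega)
  simp only [mem_neighborFinset] at hx hy hz
  set M := (G.neighborFinset z).erase u
  have hM : ∀ w ∈ M, w ≠ u ∧ G.Adj z w := fun w hw => by simpa [M] using hw
  have hfree : ∀ t, G.Adj u t → t ≠ z → ∀ w ∈ M, ¬ G.Adj t w :=
    fun t ht htz w hw htw => htz (huniq ht hz htw (hM w hw).2 (hM w hw).1)
  have hnotM : ∀ t, G.Adj u t → t ∉ M :=
    fun t ht htM => htf.not_adj_of_adj_of_adj hz ht (hM t htM).2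
  have hind : G.IsIndepSet ↑(insert x (insert y M)) := by
    rw [coe_insert, coe_insert]
    refine IsIndepSet.insert_of_not_adj (IsIndepSet.insert_of_not_adj
      ((isIndepSet_neighborSet_of_triangleFree G htf z).mono fun w hw => (hM w hw).2)
      (hfree y hy hyz)) ?_
    rintro w (rfl | hw)
    · exact htf.not_adj_of_adj_of_adj hx hy
    · exact hfree x hx hxz w hw
  have hcard : #(insert x (insert y M)) = d := by
    rw [card_insert_of_notMem (by simp [hxy, hnotM x hx]), card_insert_of_notMem (hnotM y hy),
      card_erase_of_mem (by simpa using hz.symm), card_neighborFinset_eq_degree,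
      hcrit.degree_eq_of_adj (by omega) hconn htf hu hz]
    omega
  have := hcrit.card_lt_of_isIndepSet (by omega) hconn hind
  omega

theorem DistCritical.nonempty_iso_cycleGraph_five_of_unique_adj (hd : 3 ≤ d) (hconn : G.Connected)
    (hcrit : DistCritical G d) (htf : G.CliqueFree 3) (hu : G.degree u = d - 1)
    (huniq : ∀ {x x' w}, G.Adj u x → G.Adj u x' → G.Adj x w → G.Adj x' w → w ≠ u →
      x = x') :
    Nonempty (G ≃g cycleGraph 5) := by
  classical
  have hd2 : 2 ≤ d := by omega
  obtain rfl := hcrit.eq_three_of_unique_adj hd hconn htf hu huniq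
  obtain ⟨x, y, hxy, hN⟩ := card_eq_two.1 (show #(G.neighborFinset u) = 2 by simp [hu])
  have hNu : ∀ v, G.Adj u v ↔ v = x ∨ v = y := fun v => by
    rw [← mem_neighborFinset, hN, mem_insert, mem_singleton]
  have hx := (hNu x).2 (Or.inl rfl)
  have hy := (hNu y).2 (Or.inr rfl)
  have hM : ∀ p, G.Adj u p → ∃ a, ∀ v, v ≠ u ∧ G.Adj p v ↔ v = a := fun p hp => by
    obtain ⟨a, ha⟩ := card_eq_one.1 (show #((G.neighborFinset p).erase u) = 1 by
      rw [card_erase_of_mem (by simpa using hp.symm), card_neighborFinset_eq_degree,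
        hcrit.degree_eq_of_adj hd2 hconn htf hu hp])
    exact ⟨a, fun v => by rw [← mem_singleton, ← ha, mem_erase, mem_neighborFinset]⟩
  obtain ⟨a, ha⟩ := hM x hx
  obtain ⟨b, hb⟩ := hM y hy
  obtain ⟨hau, hxa⟩ := (ha a).2 rfl
  obtain ⟨hbu, hyb⟩ := (hb b).2 rfl
  have hua := htf.not_adj_of_adj_of_adj hx.symm hxa
  have hub := htf.not_adj_of_adj_of_adj hy.symm hyb
  have hab : G.Adj a b := by
    by_contra hab
    have hind : G.IsIndepSet ↑({u, a, b} : Finset V) := by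
      rw [coe_insert, coe_pair]
      refine IsIndepSet.insert_of_not_adj ?_ (by simp [hua, hub])
      exact Set.pairwise_pair.2 fun _ => ⟨hab, mt Adj.symm hab⟩
    have := hcrit.card_lt_of_isIndepSet hd2 hconn hind
    have hne : a ≠ b := fun h => hxy (huniq hx hy hxa (h ▸ hyb) hau)
    rw [card_insert_of_notMem (by simp [hau.symm, hbu.symm]), card_pair hne] at this
    omega
  have hcover : ∀ v, v = u ∨ v = x ∨ v = a ∨ v = b ∨ v = y := by
    intro v
    by_cases hvu : v = u
    · exact Or.inl hvu
    by_cases huv : G.Adj u v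
    · rcases (hNu v).1 huv with h | h <;> simp [h]
    obtain ⟨p, hup, hpv⟩ := hcrit.exists_adj_adj_of_degree_eq hd2 hconn htf hu huv
    rcases (hNu p).1 hup with rfl | rfl
    · simp [(ha v).1 ⟨hvu, hpv⟩]
    · simp [(hb v).1 ⟨hvu, hpv⟩]
  exact nonempty_iso_cycleGraph_five_of_cover hcover hx hxa hab hyb.symm hy.symm hua hub
    (fun h => hxy (huniq hx hy h hyb hbu)) (htf.not_adj_of_adj_of_adj hx hy)
    (fun h => hxy (huniq hx hy hxa h.symm hau))

end Critical

theorem DistCritical.nonempty_iso_top_fin_two [Fintype V] {G : SimpleGraph V}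
    (hconn : G.Connected) (hcrit : DistCritical G 2) (htf : G.CliqueFree 3) :
    Nonempty (G ≃g (⊤ : SimpleGraph (Fin 2))) := by
  classical
  have hadj : ∀ a b, a ≠ b → G.Adj a b := fun a b hab => by
    by_contra h
    have := hcrit.card_lt_of_isIndepSet le_rfl hconn (s := {a, b})
      (by rw [coe_pair]; exact Set.pairwise_pair.2 fun _ => ⟨h, mt Adj.symm h⟩)
    rw [card_pair hab] at this
    omega
  have hcard : Fintype.card V = 2 := by
    refine le_antisymm ?_ (hcrit.1 ▸ distNum_le_card G)
    by_contra! h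
    obtain ⟨a, b, c, hab, hac, hbc⟩ := Fintype.two_lt_card_iff.1 h
    exact htf {a, b, c} (is3Clique_triple_iff.2 ⟨hadj _ _ hab, hadj _ _ hac, hadj _ _ hbc⟩)
  obtain rfl : G = ⊤ := by
    ext a b
    exact ⟨G.ne_of_adj, hadj a b⟩
  exact ⟨Iso.completeGraph (Fintype.equivFinOfCardEq hcard)⟩

end

theorem stmt8 {V : Type*} [Fintype V] (G : SimpleGraph V) (d : ℕ) (hd : 2 ≤ d)
    (hconn : G.Connected) (hcrit : DistCritical G d)
    (htf : G.CliqueFree 3) :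
    Nonempty (G ≃g (⊤ : SimpleGraph (Fin 2))) ∨
    Nonempty (G ≃g completeBipartiteGraph (Fin (d - 1)) (Fin (d - 1))) ∨
    Nonempty (G ≃g SimpleGraph.cycleGraph 5) := by
  classical
  obtain rfl | hd3 := hd.eq_or_lt
  · exact Or.inl (hcrit.nonempty_iso_top_fin_two hconn htf)
  obtain ⟨u, hu⟩ := hcrit.exists_degree_eq hd hconn htf
  by_cases hfull : ∃ w, w ≠ u ∧ ∀ x, G.Adj u x → G.Adj w x
  · obtain ⟨w, hwu, hw⟩ := hfull
    exact Or.inr (Or.inl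
      (hcrit.nonempty_iso_completeBipartiteGraph_of_forall_adj hd hconn htf hu hwu hw))
  push Not at hfull
  refine Or.inr (Or.inr (hcrit.nonempty_iso_cycleGraph_five_of_unique_adj hd3 hconn htf hu
    fun hx hx' hxw hx'w hwu => ?_))
  by_contra hne
  obtain ⟨y, hy, hwy⟩ := hfull _ hwu
  exact hwy ((hcrit.neighborSet_eq_of_adj_of_adj hd hconn htf hu hx hx' hne hxw hx'w hwu).ge hy)
end

section
/- If G is a 3-distinguishing critical graph, then the maximum degree of G is at most 2. -/
/-!
Complete and edgeless graphs on `n` vertices have distinguishing number `n`, since every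
transposition of vertices is an automorphism and so a distinguishing labeling must be injective.
A vertex of degree at least three lies in a triangle or has three pairwise nonadjacent
neighbours; in a 3-distinguishing critical graph either set would have to be the whole vertex
set, which is too small to contain that vertex together with its neighbours.
-/

namespace SimpleGraph

variable {V : Type*} (G : SimpleGraph V)

theorem induce_eq_bot_of_isIndepSet {s : Set V} (hs : G.IsIndepSet s) : G.induce s = ⊥ := by
  ext ⟨v, hv⟩ ⟨w, hw⟩
  simpa using fun h => hs hv hw h.ne h

theorem exists_isNClique_three_or_isNIndepSet_of_le_degree [Fintype V] [DecidableRel G.Adj]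
    {k : ℕ} {v : V} (hv : k ≤ G.degree v) :
    (∃ t, G.IsNClique 3 t) ∨ ∃ t, G.IsNIndepSet k t := by
  by_cases hG : G.CliqueFree 3
  · obtain ⟨t, htv, htk⟩ := Finset.exists_subset_card_eq hv
    refine Or.inr ⟨t, ⟨(G.isIndepSet_neighborSet_of_triangleFree hG v).mono ?_, htk⟩⟩
    simpa [← coe_neighborFinset] using htv
  · left
    simpa [CliqueFree] using hG

end SimpleGraph

open SimpleGraph

section DistinguishingNumber

variable {V : Type*} {G : SimpleGraph V}

theorem IsDistinguishing.of_injective {r : ℕ} {f : V → Fin r} (hf : Function.Injective f) :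
    IsDistinguishing G r f :=
  fun _ hφ v => hf (hφ v)

theorem IsDistinguishing.injective
    (hperm : ∀ (σ : Equiv.Perm V) (x y : V), G.Adj (σ x) (σ y) ↔ G.Adj x y)
    {r : ℕ} {f : V → Fin r} (hf : IsDistinguishing G r f) : Function.Injective f := by
  classical
  intro a b hab
  let φ : G ≃g G := ⟨Equiv.swap a b, hperm _ _ _⟩
  have hφ : ∀ v, f (φ v) = f v := Equiv.apply_swap_eq_self hab
  simpa [φ] using (hf φ hφ a).symm

theorem distNum_eq_card_of_forall_perm [Finite V]
    (hperm : ∀ (σ : Equiv.Perm V) (x y : V), G.Adj (σ x) (σ y) ↔ G.Adj x y) :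
    distNum G = Nat.card V := by
  have hcard : Nat.card V ∈ {r : ℕ | ∃ f : V → Fin r, IsDistinguishing G r f} :=
    ⟨Finite.equivFin V, .of_injective (Finite.equivFin V).injective⟩
  refine le_antisymm (Nat.sInf_le hcard) (le_csInf ⟨_, hcard⟩ ?_)
  rintro r ⟨f, hf⟩
  simpa using Nat.card_le_card_of_injective f (hf.injective hperm)

theorem distNum_top [Finite V] : distNum (⊤ : SimpleGraph V) = Nat.card V :=
  distNum_eq_card_of_forall_perm fun σ _ _ => by simp [σ.injective.ne_iff]

theorem distNum_bot [Finite V] : distNum (⊥ : SimpleGraph V) = Nat.card V :=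
  distNum_eq_card_of_forall_perm fun _ _ _ => Iff.rfl

theorem distNum_induce_of_isNClique {n : ℕ} {t : Finset V} (ht : G.IsNClique n t) :
    distNum (G.induce t) = n := by
  rw [induce_eq_top.mpr ht.isClique, distNum_top, Nat.card_coe_set_eq, Set.ncard_coe_finset,
    ht.card_eq]

theorem distNum_induce_of_isNIndepSet {n : ℕ} {t : Finset V} (ht : G.IsNIndepSet n t) :
    distNum (G.induce t) = n := by
  rw [G.induce_eq_bot_of_isIndepSet ht.isIndepSet, distNum_bot, Nat.card_coe_set_eq,
    Set.ncard_coe_finset, ht.card_eq]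

theorem DistCritical.eq_univ_of_distNum_induce {d : ℕ} (hG : DistCritical G d) {s : Set V}
    (hs : distNum (G.induce s) = d) : s = Set.univ := by
  by_contra hne
  exact hG.2 s hne hs

end DistinguishingNumber

theorem stmt16 {V : Type*} [Fintype V] (G : SimpleGraph V) [DecidableRel G.Adj]
    (hcrit : DistCritical G 3) : G.maxDegree ≤ 2 := by
  by_contra! hmax
  obtain ⟨v, hv⟩ : ∃ v, 3 ≤ G.degree v := by
    by_contra! h
    exact hmax.not_ge (G.maxDegree_le_of_forall_degree_le 2 fun v => Nat.le_of_lt_succ (h v))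
  obtain ⟨t, htd, htc⟩ : ∃ t : Finset V, distNum (G.induce t) = 3 ∧ t.card = 3 := by
    rcases G.exists_isNClique_three_or_isNIndepSet_of_le_degree hv with ⟨t, ht⟩ | ⟨t, ht⟩
    · exact ⟨t, distNum_induce_of_isNClique ht, ht.card_eq⟩
    · exact ⟨t, distNum_induce_of_isNIndepSet ht, ht.card_eq⟩
  have ht : t = Finset.univ := Finset.coe_eq_univ.mp (hcrit.eq_univ_of_distNum_induce htd)
  have hdeg := G.degree_lt_card_verts v
  rw [← Finset.card_univ, ← ht, htc] at hdeg
  omega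
end

section
/- Let G be a disconnected d-distinguishing critical graph with d ≥ 5 and c(G) connected components all isomorphic to H, and suppose c(G) < d/2. Then d = D(H) + 1, D(H) ≥ 4, and D(H, D(H)) < (D(H) − 1)/2. -/
/-!
Deleting one copy of `H` from `G ≅ copies c H` leaves a proper induced subgraph, so by
criticality its distinguishing number drops below `d`; it still contains `H` as a component,
hence `D(H) ≤ d - 1`. If `H` had `c` pairwise inequivalent `(d - 1)`-distinguishing labelings,
giving them to the `c` copies would distinguish `G` with `d - 1` labels, so `D(H, d - 1) < c`.
An optimal labeling of `H` is surjective, so composing it with the `D(H)`-subsets of the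
`d - 1` labels gives `C(d - 1, D(H)) ≤ D(H, d - 1) < c < d / 2`, which forces `D(H) = d - 1`.
Then `1 = C(D(H), D(H)) ≤ D(H, D(H)) < (D(H) - 1) / 2` gives `D(H) ≥ 4`.
-/

open SimpleGraph Function

section Labelings
variable {V : Type*} {G : SimpleGraph V} {r r' : ℕ}

lemma IsDistinguishing.comp_left {f : V → Fin r} (hf : IsDistinguishing G r f)
    {ι : Fin r → Fin r'} (hι : Injective ι) : IsDistinguishing G r' (ι ∘ f) :=
  fun φ hφ => hf φ fun v => hι (hφ v)

lemma IsDistinguishing.of_comp_left {f : V → Fin r} {g : V → Fin r'} {ι : Fin r' → Fin r}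
    (hf : IsDistinguishing G r f) (hfg : f = ι ∘ g) : IsDistinguishing G r' g :=
  fun φ hφ => hf φ fun v => by simp [hfg, hφ v]

lemma IsDistinguishing.distNum_le {f : V → Fin r} (hf : IsDistinguishing G r f) :
    distNum G ≤ r :=
  Nat.sInf_le ⟨f, hf⟩

lemma exists_isDistinguishing_distNum [Finite V] (G : SimpleGraph V) :
    ∃ f : V → Fin (distNum G), IsDistinguishing G (distNum G) f := by
  have := Fintype.ofFinite V
  exact Nat.sInf_mem (s := {r | ∃ f : V → Fin r, IsDistinguishing G r f})
    ⟨_, Fintype.equivFin V, fun φ hφ v => (Fintype.equivFin V).injective (hφ v)⟩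

lemma distNum_pos_iff [Finite V] : 0 < distNum G ↔ Nonempty V := by
  refine ⟨fun h => ?_, fun ⟨v⟩ => (exists_isDistinguishing_distNum G).choose v |>.pos⟩
  by_contra hV
  rw [not_nonempty_iff] at hV
  exact h.ne' (Nat.eq_zero_of_le_zero (IsDistinguishing.distNum_le (f := isEmptyElim)
    fun _ _ v => isEmptyElim v))

lemma IsDistinguishing.distNum_le_ncard_range {f : V → Fin r} (hf : IsDistinguishing G r f) :
    distNum G ≤ (Set.range f).ncard := by
  rw [← Nat.card_coe_set_eq]
  refine IsDistinguishing.distNum_le (f := Finite.equivFin _ ∘ Set.rangeFactorization f)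
    (hf.of_comp_left (ι := fun i => ((Finite.equivFin (Set.range f)).symm i : Fin r)) ?_)
  ext v
  simp only [comp_apply, Equiv.symm_apply_apply, Set.rangeFactorization_coe]

lemma IsDistinguishing.surjective {f : V → Fin (distNum G)}
    (hf : IsDistinguishing G (distNum G) f) : Surjective f := by
  by_contra hns
  have := Set.ncard_lt_card (mt Set.range_eq_univ.mp hns)
  rw [Nat.card_eq_fintype_card, Fintype.card_fin] at this
  exact this.not_ge hf.distNum_le_ncard_range

end Labelings

namespace SimpleGraph.Embedding
variable {V W : Type*} {G : SimpleGraph V} {H : SimpleGraph W}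

def IsAdjClosed (e : H ↪g G) : Prop :=
  ∀ v x, G.Adj (e v) x → x ∈ Set.range e

variable {e : H ↪g G}

lemma IsAdjClosed.not_adj (he : e.IsAdjClosed) {v : W} {x : V} (hx : x ∉ Set.range e) :
    ¬ G.Adj (e v) x :=
  fun h => hx (he v x h)

open scoped Classical in
noncomputable def extendAut (he : e.IsAdjClosed) (φ : H ≃g H) : G ≃g G :=
  let Φ := Equiv.Perm.extendDomain φ.toEquiv (Equiv.ofInjective e e.injective)
  have h_image (v : W) : Φ (e v) = e (φ v) := Equiv.Perm.extendDomain_apply_image _ _ v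
  have h_not_image {x : V} (hx : x ∉ Set.range e) : Φ x = x :=
    Equiv.Perm.extendDomain_apply_not_subtype _ _ hx
  { toEquiv := Φ
    map_rel_iff' := fun {a b} => by
      by_cases ha : a ∈ Set.range e <;> by_cases hb : b ∈ Set.range e
      · obtain ⟨v, rfl⟩ := ha
        obtain ⟨w, rfl⟩ := hb
        simp [h_image, φ.map_adj_iff]
      · obtain ⟨v, rfl⟩ := ha
        simp [h_image, h_not_image hb, he.not_adj hb]
      · obtain ⟨w, rfl⟩ := hb
        simp [h_image, h_not_image ha, G.adj_comm _ (e _), he.not_adj ha]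
      · simp [h_not_image ha, h_not_image hb] }

lemma extendAut_apply_apply (he : e.IsAdjClosed) (φ : H ≃g H) (v : W) :
    extendAut he φ (e v) = e (φ v) := by
  classical
  exact Equiv.Perm.extendDomain_apply_image _ _ v

lemma extendAut_apply_of_notMem (he : e.IsAdjClosed) (φ : H ≃g H) {x : V}
    (hx : x ∉ Set.range e) : extendAut he φ x = x := by
  classical
  exact Equiv.Perm.extendDomain_apply_not_subtype _ _ hx

end SimpleGraph.Embedding

section Embeddings
variable {V V' W : Type*} {G : SimpleGraph V} {G' : SimpleGraph V'} {H : SimpleGraph W} {r : ℕ}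

lemma IsDistinguishing.comp_embedding {f : V → Fin r} (hf : IsDistinguishing G r f)
    {e : H ↪g G} (he : e.IsAdjClosed) : IsDistinguishing H r (f ∘ e) := by
  intro φ hφ v
  apply e.injective
  rw [← Embedding.extendAut_apply_apply he φ]
  refine hf _ (fun x => ?_) (e v)
  by_cases hx : x ∈ Set.range e
  · obtain ⟨w, rfl⟩ := hx
    rw [Embedding.extendAut_apply_apply]
    exact hφ w
  · rw [Embedding.extendAut_apply_of_notMem he φ hx]

lemma distNum_le_of_embedding [Finite V] {e : H ↪g G} (he : e.IsAdjClosed) :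
    distNum H ≤ distNum G :=
  have ⟨_, hf⟩ := exists_isDistinguishing_distNum G
  (hf.comp_embedding he).distNum_le

lemma SimpleGraph.Iso.isAdjClosed_toEmbedding (e : G ≃g G') : e.toEmbedding.IsAdjClosed :=
  fun _ x _ => ⟨e.symm x, e.apply_symm_apply x⟩

lemma distNum_congr (e : G ≃g G') : distNum G = distNum G' := by
  unfold distNum
  congr 1
  ext r
  exact ⟨fun ⟨f, hf⟩ => ⟨f ∘ e.symm, hf.comp_embedding (Iso.isAdjClosed_toEmbedding e.symm)⟩,
    fun ⟨f, hf⟩ => ⟨f ∘ e, hf.comp_embedding (Iso.isAdjClosed_toEmbedding e)⟩⟩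

def SimpleGraph.Iso.inducePreimage (e : G ≃g G') (s : Set V') :
    G.induce (e ⁻¹' s) ≃g G'.induce s where
  toEquiv := e.toEquiv.subtypeEquiv fun _ => Iff.rfl
  map_rel_iff' := e.map_adj_iff

lemma DistCritical.congr {d : ℕ} (e : G ≃g G') (h : DistCritical G d) : DistCritical G' d := by
  refine ⟨distNum_congr e ▸ h.1, fun s hs => ?_⟩
  rw [← distNum_congr (Iso.inducePreimage e s)]
  refine h.2 _ fun huniv => hs ?_
  rwa [Set.preimage_eq_univ_iff, e.surjective.range_eq, Set.univ_subset_iff] at huniv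

end Embeddings

lemma Nat.self_le_choose {n m : ℕ} (h₀ : 0 < m) (h : m < n) : n ≤ n.choose m := by
  induction n generalizing m with
  | zero => omega
  | succ n ih =>
    obtain ⟨m, rfl⟩ : ∃ m', m = m' + 1 := ⟨m - 1, by omega⟩
    rw [Nat.choose_succ_succ']
    rcases m.eq_zero_or_pos with rfl | hm
    · simp
    · have := ih hm (by omega)
      have := Nat.choose_pos (n := n) (k := m + 1) (by omega)
      omega

section Counting
variable {V : Type*} {G : SimpleGraph V} {k : ℕ}

/-- `numDistLab G k` is, by definition, the number of classes of this relation. -/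
def DistLabRel (G : SimpleGraph V) (k : ℕ) (f g : {f : V → Fin k // IsDistinguishing G k f}) :
    Prop :=
  ∃ φ : G ≃g G, ∀ v, f.1 (φ v) = g.1 v

lemma distLabRel_equivalence : Equivalence (DistLabRel G k) where
  refl _ := ⟨RelIso.refl _, fun _ => rfl⟩
  symm := fun ⟨φ, h⟩ => ⟨φ.symm, fun u => by simpa using (h (φ.symm u)).symm⟩
  trans := fun ⟨φ, hφ⟩ ⟨ψ, hψ⟩ => ⟨ψ.trans φ, fun v => (hφ (ψ v)).trans (hψ v)⟩

lemma card_le_numDistLab [Finite V] {α : Type*}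
    (F : α → {f : V → Fin k // IsDistinguishing G k f})
    (hF : ∀ a b, DistLabRel G k (F a) (F b) → a = b) : Nat.card α ≤ numDistLab G k :=
  Nat.card_le_card_of_injective (fun a => Quot.mk (DistLabRel G k) (F a)) fun a b hab =>
    hF a b (distLabRel_equivalence.eqvGen_iff.mp (Quot.eq.mp hab))

lemma exists_of_le_numDistLab [Finite V] {n : ℕ} (h : n ≤ numDistLab G k) :
    ∃ F : Fin n → {f : V → Fin k // IsDistinguishing G k f},
      ∀ a b, DistLabRel G k (F a) (F b) → a = b := by
  let ι : Fin n → Quot (DistLabRel G k) := (Finite.equivFin _).symm ∘ Fin.castLE h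
  refine ⟨fun a => (ι a).out, fun a b hab => ?_⟩
  refine (Fin.castLE_injective h) ((Finite.equivFin _).symm.injective ?_)
  change ι a = ι b
  rw [← Quot.out_eq (ι a), ← Quot.out_eq (ι b)]
  exact Quot.sound hab

/-- Composing an optimal labeling with the `distNum G`-subsets of `Fin k` gives labelings with
pairwise different ranges. -/
lemma choose_distNum_le_numDistLab [Finite V] :
    k.choose (distNum G) ≤ numDistLab G k := by
  obtain ⟨f, hf⟩ := exists_isDistinguishing_distNum G
  have h_range (S : Finset (Fin k)) (hS : S.card = distNum G) :
      Set.range (S.orderEmbOfFin hS ∘ f) = S := by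
    rw [Set.range_comp, hf.surjective.range_eq, Set.image_univ, Finset.range_orderEmbOfFin]
  have hcard := Fintype.card_finset_len (α := Fin k) (distNum G)
  rw [Fintype.card_fin, ← Nat.card_eq_fintype_card] at hcard
  rw [← hcard]
  refine card_le_numDistLab (fun S => ⟨_, hf.comp_left (S.1.orderEmbOfFin S.2).injective⟩) ?_
  rintro S T ⟨φ, hφ⟩
  apply Subtype.ext
  rw [← Finset.coe_inj, ← h_range S.1 S.2, ← h_range T.1 T.2, ← φ.surjective.range_comp]
  exact congrArg Set.range (funext hφ)

end Counting

section Copies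
variable {W : Type*} {c k : ℕ} {H : SimpleGraph W}

lemma copies_fst_eq_of_reachable {x y : Fin c × W} (h : (copies c H).Reachable x y) :
    x.1 = y.1 := by
  obtain ⟨p⟩ := h
  induction p with
  | nil => rfl
  | cons hadj _ ih => exact hadj.1.trans ih

lemma copies_aut_fst_eq (hH : H.Connected) (ψ : copies c H ≃g copies c H) (j : Fin c)
    (v w : W) : (ψ (j, v)).1 = (ψ (j, w)).1 :=
  copies_fst_eq_of_reachable <|
    ((hH v w).map (⟨fun u => (j, u), fun h => ⟨rfl, h⟩⟩ : H →g copies c H)).map ψ.toHom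

lemma exists_copies_aut_eq (hH : H.Connected) (ψ : copies c H ≃g copies c H) (j : Fin c) :
    ∃ (i : Fin c) (φ : H ≃g H), ∀ v, ψ (j, v) = (i, φ v) := by
  obtain ⟨v₀⟩ := hH.nonempty
  set i := (ψ (j, v₀)).1
  have hψ (v : W) : ψ (j, v) = (i, (ψ (j, v)).2) :=
    Prod.ext (copies_aut_fst_eq hH ψ j v v₀) rfl
  have hψ_symm (u : W) : ψ.symm (i, u) = (j, (ψ.symm (i, u)).2) := by
    refine Prod.ext ?_ rfl
    rw [copies_aut_fst_eq hH ψ.symm i u (ψ (j, v₀)).2, ← hψ v₀, ψ.symm_apply_apply]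
  refine ⟨i, ⟨⟨fun v => (ψ (j, v)).2, fun u => (ψ.symm (i, u)).2, fun v => ?_, fun u => ?_⟩,
    fun {a b} => ?_⟩, fun v => hψ v⟩
  · simp [← hψ]
  · simp [← hψ_symm]
  · have h := ψ.map_adj_iff (v := (j, a)) (w := (j, b))
    rw [hψ a, hψ b] at h
    simpa [copies] using h

theorem isDistinguishing_copies (hH : H.Connected) (f : Fin c → W → Fin k)
    (hf : ∀ j, IsDistinguishing H k (f j))
    (hf_inequiv : ∀ a b, (∃ φ : H ≃g H, ∀ v, f a (φ v) = f b v) → a = b) :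
    IsDistinguishing (copies c H) k (fun x => f x.1 x.2) := by
  rintro ψ hψ ⟨j, v⟩
  obtain ⟨i, φ, hφ⟩ := exists_copies_aut_eq hH ψ j
  have hφ_pres (w : W) : f i (φ w) = f j w := by simpa [hφ] using hψ (j, w)
  obtain rfl := hf_inequiv i j ⟨φ, hφ_pres⟩
  rw [hφ, hf i φ hφ_pres v]

lemma distNum_copies_le [Finite W] (hH : H.Connected) (h : c ≤ numDistLab H k) :
    distNum (copies c H) ≤ k :=
  have ⟨F, hF⟩ := exists_of_le_numDistLab h
  (isDistinguishing_copies hH (fun j => (F j).1) (fun j => (F j).2) hF).distNum_le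

def copyEmbedding (j : Fin c) {s : Set (Fin c × W)} (hj : ∀ v, (j, v) ∈ s) :
    H ↪g (copies c H).induce s where
  toFun v := ⟨(j, v), hj v⟩
  inj' _ _ h := congrArg (fun x : s => x.1.2) h
  map_rel_iff' := ⟨And.right, fun h => ⟨rfl, h⟩⟩

lemma isAdjClosed_copyEmbedding (j : Fin c) {s : Set (Fin c × W)} (hj : ∀ v, (j, v) ∈ s) :
    (copyEmbedding (H := H) j hj).IsAdjClosed :=
  fun _ x h => ⟨x.1.2, Subtype.ext (Prod.ext h.1 rfl)⟩

lemma isAdjClosed_induce_copies_ne (j₀ : Fin c) :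
    (Embedding.induce (G := copies c H) {x | x.1 ≠ j₀}).IsAdjClosed :=
  fun v x h => ⟨⟨x, fun hx => v.2 (h.1.trans hx)⟩, rfl⟩

end Copies

theorem stmt18_general {V W : Type*} [Fintype W] (G : SimpleGraph V)
    (H : SimpleGraph W) (d c : ℕ) (hc : 2 ≤ c)
    (hH : H.Connected) (hiso : Nonempty (G ≃g copies c H))
    (hcrit : DistCritical G d) (hsmall : 2 * c < d) :
    d = distNum H + 1 ∧ 4 ≤ distNum H ∧
      2 * numDistLab H (distNum H) < distNum H - 1 := by
  obtain ⟨hd, hcrit⟩ := hcrit.congr hiso.some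
  have hW : Nonempty W := (distNum_pos_iff.mp (hd ▸ (by omega : 0 < d))).map Prod.snd
  let j₀ : Fin c := ⟨0, by omega⟩
  let s : Set (Fin c × W) := {x | x.1 ≠ j₀}
  have hs : s ≠ Set.univ :=
    (Set.ne_univ_iff_exists_notMem s).mpr ⟨(j₀, Classical.arbitrary W), fun h => h rfl⟩
  have h_rest : distNum ((copies c H).induce s) < d :=
    (hd ▸ distNum_le_of_embedding (isAdjClosed_induce_copies_ne j₀)).lt_of_ne (hcrit s hs)
  have h_copy : ∀ v, ((⟨1, hc⟩ : Fin c), v) ∈ s := fun _ h => by simp [j₀] at h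
  have hH_lt : distNum H < d :=
    (distNum_le_of_embedding (isAdjClosed_copyEmbedding _ h_copy)).trans_lt h_rest
  have h_count : numDistLab H (d - 1) < c := by
    by_contra! h
    exact (distNum_copies_le hH h).not_gt (by omega)
  have hH_eq : distNum H = d - 1 := by
    by_contra hne
    have := Nat.self_le_choose (distNum_pos_iff.mpr hW) (show distNum H < d - 1 by omega)
    have := choose_distNum_le_numDistLab (G := H) (k := d - 1)
    omega
  have h_one : 1 ≤ numDistLab H (distNum H) := by
    simpa using choose_distNum_le_numDistLab (G := H) (k := distNum H)
  rw [← hH_eq] at h_count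
  omega

theorem stmt18 {V W : Type*} [Fintype V] [Fintype W] (G : SimpleGraph V)
    (H : SimpleGraph W) (d c : ℕ) (hd : 5 ≤ d) (hc : 2 ≤ c)
    (hH : H.Connected) (hiso : Nonempty (G ≃g copies c H))
    (hcrit : DistCritical G d) (hsmall : 2 * c < d) :
    d = distNum H + 1 ∧ 4 ≤ distNum H ∧
      2 * numDistLab H (distNum H) < distNum H - 1 :=
  stmt18_general G H d c hc hH hiso hcrit hsmall
end
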